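/- Let r ≥ 0, d₁(r) = (8+r)/(6+r) and d₂(r) = (3+r)/(4+r). Then for every real ω, max(|1 − ω·d₁(r)|, |1 − ω·d₂(r)|) ≥ (3r + 14)/(2r² + 21r + 50), and equality holds for ω = ω_opt(r) = (2r² + 20r + 48)/(2r² + 21r + 50); i.e. the minimum over ω of max(|1 − ω·d₁(r)|, |1 − ω·d₂(r)|) equals μ_opt(r) = (3r + 14)/(2r² + 21r + 50) and is attained at ω_opt(r) = 2/(d₁(r) + d₂(r)). -/
import Mathlib


noncomputable def d₁ (r : ℝ) : ℝ := (8 + r) / (6 + r)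
noncomputable def d₂ (r : ℝ) : ℝ := (3 + r) / (4 + r)
noncomputable def μopt (r : ℝ) : ℝ := (3*r + 14) / (2*r^2 + 21*r + 50)
noncomputable def ωopt (r : ℝ) : ℝ := (2*r^2 + 20*r + 48) / (2*r^2 + 21*r + 50)

theorem optimal_smoothing_factor (r : ℝ) (hr : 0 ≤ r) :
    (∀ ω : ℝ, μopt r ≤ max |1 - ω * d₁ r| |1 - ω * d₂ r|) ∧
    max |1 - ωopt r * d₁ r| |1 - ωopt r * d₂ r| = μopt r ∧
    ωopt r = 2 / (d₁ r + d₂ r) := by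
  have h6 : (0:ℝ) < 6 + r := by linarith
  have h4 : (0:ℝ) < 4 + r := by linarith
  have hD : (0:ℝ) < 2*r^2 + 21*r + 50 := by nlinarith
  have hμ : 0 < μopt r := by
    unfold μopt; positivity
  have key1 : 1 - ωopt r * d₁ r = -(μopt r) := by
    unfold ωopt d₁ μopt
    field_simp
    ring
  have key2 : 1 - ωopt r * d₂ r = μopt r := by
    unfold ωopt d₂ μopt
    field_simp
    ring
  refine ⟨?_, ?_, ?_⟩
  · intro ω
    rcases le_total ω (ωopt r) with h | h
    · have hd2 : 0 < d₂ r := by unfold d₂; positivity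
      have : μopt r ≤ 1 - ω * d₂ r := by
        have := mul_le_mul_of_nonneg_right h hd2.le
        linarith [key2]
      calc μopt r ≤ 1 - ω * d₂ r := this
        _ ≤ |1 - ω * d₂ r| := le_abs_self _
        _ ≤ _ := le_max_right _ _
    · have hd1 : 0 < d₁ r := by unfold d₁; positivity
      have : μopt r ≤ -(1 - ω * d₁ r) := by
        have := mul_le_mul_of_nonneg_right h hd1.le
        linarith [key1]
      calc μopt r ≤ -(1 - ω * d₁ r) := this
        _ ≤ |1 - ω * d₁ r| := neg_le_abs _
        _ ≤ _ := le_max_left _ _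
  · rw [key1, key2, abs_neg, abs_of_pos hμ, max_self]
  · unfold ωopt d₁ d₂
    rw [div_add_div _ _ (ne_of_gt h6) (ne_of_gt h4), div_div_eq_mul_div]
    rw [div_eq_div_iff hD.ne' (by nlinarith)]
    ring
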